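/- Let P be a K×K row-stochastic real matrix, μ a probability vector on {1,…,K}, a₀, a₁, σ : {1,…,K} → ℝ, λ = max_{1≤k≤K} Σ_{j=1}^{K} P_{kj} a₁(j)², and let φ₁⁺ = diag(|a₁(1)|,…,|a₁(K)|). Let (Z_t)_{t≥1} be a Markov chain on {1,…,K} with transition matrix P and initial distribution μ, and let (ε_m)_{m≥0} be i.i.d. standard normal random variables independent of (Z_t)_{t≥1}. Assume λ < 1 and every complex eigenvalue of P φ₁⁺ has modulus strictly less than 1. Then the random series S = Σ_{m=0}^{∞} (Π_{i=2}^{m+1} a₁(Z_i)) · (a₀(Z₁) + σ(Z₁) ε_m) converges absolutely almost surely, and E[S²] < ∞. -/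

import Mathlib

/-!
Write the `m`-th summand as `X m = W m * (a₀ (Z 0) + σ (Z 0) * ε m)` with
`W m = ∏_{i=1}^m a₁ (Z i)`. As the chain is independent of the noise,
`E (X m)² ≤ E [(W m)² * g (Z 0)]` with `g = 2 a₀² + 2 σ² E ε²`. Expanding this expectation as a
sum over the paths of the chain, every step contributes a factor `∑ j, P k j * a₁ j ^ 2 ≤ λ`, so
`E (X m)² ≤ C λ^m`. The `L²` norms of the summands therefore decay geometrically, and a series
whose `L²` norms are summable converges absolutely almost everywhere to a function in `L²`.
-/

open MeasureTheory ProbabilityTheory Finset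
open scoped ENNReal

section SquareSummableSeries

variable {α E : Type*} [MeasurableSpace α] {μ : Measure α} [NormedAddCommGroup E]

lemma sq_eLpNorm_two {ε : Type*} [ENorm ε] (f : α → ε) :
    eLpNorm f 2 μ ^ 2 = ∫⁻ x, ‖f x‖ₑ ^ 2 ∂μ := by
  rw [eLpNorm_eq_lintegral_rpow_enorm_toReal two_ne_zero ENNReal.ofNat_ne_top,
    ← ENNReal.rpow_natCast, ← ENNReal.rpow_mul]
  norm_num

lemma tsum_eLpNorm_two_ne_top_of_lintegral_le_geometric {X : ℕ → α → E} {C r : ℝ≥0∞}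
    (hC : C ≠ ∞) (hr : r < 1) (h : ∀ m, ∫⁻ x, ‖X m x‖ₑ ^ 2 ∂μ ≤ C * r ^ m) :
    ∑' m, eLpNorm (X m) 2 μ ≠ ∞ := by
  set s : ℝ≥0∞ := r ^ (2⁻¹ : ℝ)
  have hs : s < 1 := ENNReal.rpow_lt_one hr (by norm_num)
  have hbound (m : ℕ) : eLpNorm (X m) 2 μ ≤ C ^ (2⁻¹ : ℝ) * s ^ m := by
    rw [← ENNReal.pow_le_pow_left_iff two_ne_zero, sq_eLpNorm_two, mul_pow,
      ← ENNReal.rpow_natCast, ← ENNReal.rpow_mul, ← pow_mul', pow_mul, ← ENNReal.rpow_natCast s,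
      ← ENNReal.rpow_mul]
    norm_num
    exact h m
  refine ne_top_of_le_ne_top ?_ (ENNReal.tsum_le_tsum hbound)
  rw [ENNReal.tsum_mul_left, ENNReal.tsum_geometric]
  exact ENNReal.mul_ne_top (ENNReal.rpow_ne_top_of_nonneg (by norm_num) hC)
    (ENNReal.inv_ne_top.mpr (tsub_pos_of_lt hs).ne')

theorem memLp_tsum_of_tsum_eLpNorm_ne_top [CompleteSpace E] {ι : Type*} [Countable ι]
    {p : ℝ≥0∞} (hp : 1 ≤ p) {X : ι → α → E} (hX : ∀ m, AEStronglyMeasurable (X m) μ)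
    (h : ∑' m, eLpNorm (X m) p μ ≠ ∞) :
    MemLp (fun x => ∑' m, X m x) p μ := by
  have : Fact (1 ≤ p) := ⟨hp⟩
  have hmem (m : ι) : MemLp (X m) p μ := ⟨hX m, (ENNReal.le_tsum m).trans_lt h.lt_top⟩
  have hcoe : ∀ᵐ x ∂μ, ∀ m, (hmem m).toLp (X m) x = X m x :=
    ae_all_iff.mpr fun m => (hmem m).coeFn_toLp
  refine (Lp.memLp (∑' m, (hmem m).toLp (X m))).ae_eq ?_
  filter_upwards [Lp.coeFn_tsum (f := fun m => (hmem m).toLp (X m)) (by simpa using h), hcoe]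
    with x hx hx'
  rw [hx]
  exact tsum_congr hx'

end SquareSummableSeries

theorem sum_mul_prod_le_of_sum_le {ι : Type*} [Fintype ι] {Q : ι → ι → ℝ≥0∞} {r : ℝ≥0∞}
    (hQ : ∀ k, ∑ j, Q k j ≤ r) (ν : ι → ℝ≥0∞) :
    ∀ m : ℕ, ∑ z : Fin (m + 1) → ι, ν (z 0) * ∏ i : Fin m, Q (z i.castSucc) (z i.succ) ≤
      (∑ k, ν k) * r ^ m
  | 0 => by
    simp only [univ_eq_empty, prod_empty, mul_one, pow_zero]
    exact ((Equiv.funUnique (Fin 1) ι).sum_comp ν).le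
  | m + 1 => by
    calc ∑ z : Fin (m + 2) → ι, ν (z 0) * ∏ i : Fin (m + 1), Q (z i.castSucc) (z i.succ)
        = ∑ z : Fin (m + 1) → ι, ν (z 0) * (∏ i : Fin m, Q (z i.castSucc) (z i.succ)) *
            ∑ j, Q (z (Fin.last m)) j := by
          rw [← (Fin.snocEquiv fun _ => ι).sum_comp, Fintype.sum_prod_type_right]
          refine sum_congr rfl fun z _ => ?_
          have h0 : (0 : Fin (m + 2)) = (0 : Fin (m + 1)).castSucc := rfl
          simp only [Fin.snocEquiv_apply, Fin.prod_univ_castSucc, mul_sum, h0,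
            Fin.succ_castSucc, Fin.snoc_castSucc, Fin.succ_last, Fin.snoc_last, mul_assoc]
      _ ≤ ∑ z : Fin (m + 1) → ι, ν (z 0) * (∏ i : Fin m, Q (z i.castSucc) (z i.succ)) * r := by
          gcongr; exact hQ _
      _ ≤ (∑ k, ν k) * r ^ (m + 1) := by
          rw [← sum_mul, pow_succ, ← mul_assoc]
          gcongr
          exact sum_mul_prod_le_of_sum_le hQ ν m

lemma prod_Icc_one_eq_prod_fin {M : Type*} [CommMonoid M] (f : ℕ → M) (m : ℕ) :
    ∏ i ∈ Icc 1 m, f i = ∏ i : Fin m, f (i + 1) := by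
  rw [Fin.prod_univ_eq_prod_range (fun i => f (i + 1)), ← Ico_add_one_right_eq_Icc,
    prod_Ico_eq_prod_range]
  simp [add_comm]

lemma Real.enorm_sq (x : ℝ) : ‖x‖ₑ ^ 2 = ENNReal.ofReal (x ^ 2) := by
  rw [Real.enorm_eq_ofReal_abs, ← ENNReal.ofReal_pow (abs_nonneg x), sq_abs]

lemma lintegral_comp_eq_sum_measure_preimage {Ω ι : Type*} [MeasurableSpace Ω]
    [MeasurableSpace ι] [MeasurableSingletonClass ι] [Fintype ι] {μ : Measure Ω} {V : Ω → ι}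
    (hV : Measurable V) (F : ι → ℝ≥0∞) : ∫⁻ ω, F (V ω) ∂μ = ∑ z, μ (V ⁻¹' {z}) * F z := by
  rw [← lintegral_map (measurable_of_finite F) hV, lintegral_fintype]
  simp_rw [Measure.map_apply hV (measurableSet_singleton _), mul_comm]

lemma indepFun_pi_of_indep_iSup {Ω ι κ β γ : Type*} [MeasurableSpace Ω] {μ : Measure Ω}
    [MeasurableSpace β] [MeasurableSpace γ] {Z : ι → Ω → β} {Y : κ → Ω → γ}
    (h : Indep (⨆ i, MeasurableSpace.comap (Z i) inferInstance)
      (⨆ k, MeasurableSpace.comap (Y k) inferInstance) μ) (k : κ) :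
    IndepFun (fun ω i => Z i ω) (Y k) μ := by
  refine indep_of_indep_of_le_right (indep_of_indep_of_le_left h ?_) (le_iSup_of_le k le_rfl)
  rw [MeasurableSpace.pi, MeasurableSpace.comap_iSup]
  exact iSup_mono fun i => by rw [MeasurableSpace.comap_comp]; rfl

lemma enorm_mul_add_mul_sq_le (w a s e : ℝ) :
    ‖w * (a + s * e)‖ₑ ^ 2 ≤
      ‖w‖ₑ ^ 2 * (2 * ‖a‖ₑ ^ 2) + ‖w‖ₑ ^ 2 * (2 * ‖s‖ₑ ^ 2) * ‖e‖ₑ ^ 2 := by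
  simp only [enorm_eq_nnnorm]
  norm_cast
  rw [← NNReal.coe_le_coe]
  push_cast
  simp only [Real.norm_eq_abs, sq_abs]
  nlinarith [sq_nonneg (w * (a - s * e))]

section MarkovChain

variable {K : ℕ} {Ω : Type*} [MeasurableSpace Ω]

def HasMarkovLaw (μ : Measure Ω) (Z : ℕ → Ω → Fin K) (μvec : Fin K → ℝ)
    (P : Matrix (Fin K) (Fin K) ℝ) : Prop :=
  ∀ (n : ℕ) (z : Fin (n + 1) → Fin K), μ {ω | ∀ i : Fin (n + 1), Z i ω = z i} =
    ENNReal.ofReal (μvec (z 0) * ∏ i : Fin n, P (z i.castSucc) (z i.succ))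

variable {μ : Measure Ω} {Z : ℕ → Ω → Fin K} {μvec : Fin K → ℝ} {P : Matrix (Fin K) (Fin K) ℝ}

lemma lintegral_enorm_prod_sq_mul_le (hP0 : ∀ i j, 0 ≤ P i j) (hμ0 : ∀ k, 0 ≤ μvec k)
    (hZmeas : ∀ t, Measurable (Z t)) (hZ : HasMarkovLaw μ Z μvec P)
    {a : Fin K → ℝ} {lam : ℝ} (hlam : ∀ k, ∑ j, P k j * a j ^ 2 ≤ lam)
    (g : Fin K → ℝ≥0∞) (m : ℕ) :
    ∫⁻ ω, ‖∏ i ∈ Icc 1 m, a (Z i ω)‖ₑ ^ 2 * g (Z 0 ω) ∂μ ≤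
      (∑ k, ENNReal.ofReal (μvec k) * g k) * ENNReal.ofReal lam ^ m := by
  set Q : Fin K → Fin K → ℝ≥0∞ := fun k j => ENNReal.ofReal (P k j * a j ^ 2)
  have hQ (k : Fin K) : ∑ j, Q k j ≤ ENNReal.ofReal lam := by
    rw [← ENNReal.ofReal_sum_of_nonneg fun j _ => mul_nonneg (hP0 k j) (sq_nonneg _)]
    exact ENNReal.ofReal_le_ofReal (hlam k)
  set V : Ω → Fin (m + 1) → Fin K := fun ω i => Z i ω
  have hV : Measurable V := measurable_pi_lambda _ fun i => hZmeas i
  have hlaw (z : Fin (m + 1) → Fin K) : μ (V ⁻¹' {z}) =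
      ENNReal.ofReal (μvec (z 0)) * ∏ i : Fin m, ENNReal.ofReal (P (z i.castSucc) (z i.succ)) := by
    rw [← ENNReal.ofReal_prod_of_nonneg fun i _ => hP0 _ _, ← ENNReal.ofReal_mul (hμ0 _),
      ← hZ m z]
    congr 1
    ext ω
    simp [V, funext_iff]
  set F : (Fin (m + 1) → Fin K) → ℝ≥0∞ :=
    fun z => (∏ i : Fin m, ENNReal.ofReal (a (z i.succ) ^ 2)) * g (z 0)
  have hF (ω : Ω) : ‖∏ i ∈ Icc 1 m, a (Z i ω)‖ₑ ^ 2 * g (Z 0 ω) = F (V ω) := by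
    simp only [F, V, Real.enorm_sq, prod_Icc_one_eq_prod_fin, ← prod_pow, Fin.val_succ,
      ENNReal.ofReal_prod_of_nonneg fun _ _ => sq_nonneg _, Fin.val_zero]
  calc ∫⁻ ω, ‖∏ i ∈ Icc 1 m, a (Z i ω)‖ₑ ^ 2 * g (Z 0 ω) ∂μ
      = ∑ z, μ (V ⁻¹' {z}) * F z := by
        simp_rw [hF]
        exact lintegral_comp_eq_sum_measure_preimage hV F
    _ = ∑ z : Fin (m + 1) → Fin K, ENNReal.ofReal (μvec (z 0)) * g (z 0) *
          ∏ i : Fin m, Q (z i.castSucc) (z i.succ) := by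
        refine sum_congr rfl fun z _ => ?_
        simp only [hlaw, F, Q, ENNReal.ofReal_mul (hP0 _ _), prod_mul_distrib]
        ring
    _ ≤ _ := sum_mul_prod_le_of_sum_le hQ _ m

lemma lintegral_enorm_prod_mul_add_mul_sq_le (hP0 : ∀ i j, 0 ≤ P i j) (hμ0 : ∀ k, 0 ≤ μvec k)
    (hZmeas : ∀ t, Measurable (Z t)) (hZ : HasMarkovLaw μ Z μvec P)
    {a₀ a₁ σ : Fin K → ℝ} {lam : ℝ} (hlam : ∀ k, ∑ j, P k j * a₁ j ^ 2 ≤ lam)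
    {ε : ℕ → Ω → ℝ} (hεmeas : ∀ t, Measurable (ε t)) {c : ℝ≥0∞}
    (hε2 : ∀ m, ∫⁻ ω, ‖ε m ω‖ₑ ^ 2 ∂μ ≤ c)
    (hZε : Indep (⨆ t, MeasurableSpace.comap (Z t) inferInstance)
      (⨆ m, MeasurableSpace.comap (ε m) inferInstance) μ) (m : ℕ) :
    ∫⁻ ω, ‖(∏ i ∈ Icc 1 m, a₁ (Z i ω)) * (a₀ (Z 0 ω) + σ (Z 0 ω) * ε m ω)‖ₑ ^ 2 ∂μ ≤
      (∑ k, ENNReal.ofReal (μvec k) * (2 * ‖a₀ k‖ₑ ^ 2 + 2 * ‖σ k‖ₑ ^ 2 * c)) *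
        ENNReal.ofReal lam ^ m := by
  set W : Ω → ℝ≥0∞ := fun ω => ‖∏ i ∈ Icc 1 m, a₁ (Z i ω)‖ₑ ^ 2
  have hpath : Measurable fun ω (t : ℕ) => Z t ω := measurable_pi_lambda _ hZmeas
  have hφ (s : Fin K → ℝ) : Measurable fun p : ℕ → Fin K =>
      ‖∏ i ∈ Icc 1 m, a₁ (p i)‖ₑ ^ 2 * (2 * ‖s (p 0)‖ₑ ^ 2) := by
    fun_prop
  have hA : Measurable fun ω => W ω * (2 * ‖a₀ (Z 0 ω)‖ₑ ^ 2) := (hφ a₀).comp hpath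
  have hB : Measurable fun ω => W ω * (2 * ‖σ (Z 0 ω)‖ₑ ^ 2) := (hφ σ).comp hpath
  have hindep : IndepFun (fun ω => W ω * (2 * ‖σ (Z 0 ω)‖ₑ ^ 2)) (fun ω => ‖ε m ω‖ₑ ^ 2) μ :=
    (indepFun_pi_of_indep_iSup hZε m).comp (hφ σ) (measurable_enorm.pow_const 2)
  calc ∫⁻ ω, ‖(∏ i ∈ Icc 1 m, a₁ (Z i ω)) * (a₀ (Z 0 ω) + σ (Z 0 ω) * ε m ω)‖ₑ ^ 2 ∂μ
      ≤ ∫⁻ ω, W ω * (2 * ‖a₀ (Z 0 ω)‖ₑ ^ 2) +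
          W ω * (2 * ‖σ (Z 0 ω)‖ₑ ^ 2) * ‖ε m ω‖ₑ ^ 2 ∂μ :=
        lintegral_mono fun ω => enorm_mul_add_mul_sq_le _ _ _ _
    _ = ∫⁻ ω, W ω * (2 * ‖a₀ (Z 0 ω)‖ₑ ^ 2) ∂μ +
          (∫⁻ ω, W ω * (2 * ‖σ (Z 0 ω)‖ₑ ^ 2) ∂μ) * ∫⁻ ω, ‖ε m ω‖ₑ ^ 2 ∂μ := by
        rw [lintegral_add_left hA, lintegral_mul_eq_lintegral_mul_lintegral_of_indepFun''
          hB.aemeasurable ((hεmeas m).enorm.pow_const 2).aemeasurable hindep]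
    _ ≤ ∫⁻ ω, W ω * (2 * ‖a₀ (Z 0 ω)‖ₑ ^ 2) ∂μ +
          (∫⁻ ω, W ω * (2 * ‖σ (Z 0 ω)‖ₑ ^ 2) ∂μ) * c := by gcongr; exact hε2 m
    _ = ∫⁻ ω, W ω * (2 * ‖a₀ (Z 0 ω)‖ₑ ^ 2 + 2 * ‖σ (Z 0 ω)‖ₑ ^ 2 * c) ∂μ := by
        rw [← lintegral_mul_const _ hB, ← lintegral_add_left hA]
        simp_rw [mul_add, mul_assoc]
    _ ≤ _ := lintegral_enorm_prod_sq_mul_le hP0 hμ0 hZmeas hZ hlam _ m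

end MarkovChain

-- `Z n` is the paper's `Z_{n+1}`.
theorem stmt_16_general (K : ℕ) (P : Matrix (Fin K) (Fin K) ℝ)
    (hP0 : ∀ i j, 0 ≤ P i j)
    (μvec : Fin K → ℝ) (hμ0 : ∀ k, 0 ≤ μvec k)
    (a₀ a₁ σv : Fin K → ℝ) (lam : ℝ)
    (hlam : IsGreatest (Set.range fun k : Fin K => ∑ j, P k j * a₁ j ^ 2) lam)
    (hlt : lam < 1)
    {Ω : Type*} [MeasurableSpace Ω] (μpr : Measure Ω)
    (Z : ℕ → Ω → Fin K) (ε : ℕ → Ω → ℝ)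
    (hZmeas : ∀ t, Measurable (Z t)) (hεmeas : ∀ t, Measurable (ε t))
    (hZ : ∀ (n : ℕ) (z : Fin (n + 1) → Fin K),
      μpr {ω | ∀ i : Fin (n + 1), Z i ω = z i} =
        ENNReal.ofReal (μvec (z 0) * ∏ i : Fin n, P (z i.castSucc) (z i.succ)))
    (hεgauss : ∀ m, Measure.map (ε m) μpr = ProbabilityTheory.gaussianReal 0 1)
    (hZε : ProbabilityTheory.Indep
      (⨆ t, MeasurableSpace.comap (Z t) inferInstance)
      (⨆ m, MeasurableSpace.comap (ε m) inferInstance) μpr) :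
    (∀ᵐ ω ∂μpr, Summable fun m : ℕ =>
        |(∏ i ∈ Finset.Icc 1 m, a₁ (Z i ω)) * (a₀ (Z 0 ω) + σv (Z 0 ω) * ε m ω)|) ∧
      Integrable (fun ω =>
        (∑' m : ℕ,
          (∏ i ∈ Finset.Icc 1 m, a₁ (Z i ω)) * (a₀ (Z 0 ω) + σv (Z 0 ω) * ε m ω)) ^ 2)
        μpr := by
  set X : ℕ → Ω → ℝ := fun m ω =>
    (∏ i ∈ Finset.Icc 1 m, a₁ (Z i ω)) * (a₀ (Z 0 ω) + σv (Z 0 ω) * ε m ω)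
  have hX (m : ℕ) : AEStronglyMeasurable (X m) μpr := by fun_prop
  have hc : ∫⁻ x, ‖x‖ₑ ^ 2 ∂gaussianReal 0 1 ≠ ∞ := by
    rw [← sq_eLpNorm_two]
    exact ENNReal.pow_ne_top (memLp_id_gaussianReal 2).eLpNorm_ne_top
  have hε2 (m : ℕ) : ∫⁻ ω, ‖ε m ω‖ₑ ^ 2 ∂μpr ≤ ∫⁻ x, ‖x‖ₑ ^ 2 ∂gaussianReal 0 1 := by
    rw [← hεgauss m, lintegral_map (by fun_prop) (hεmeas m)]
  have hsum : ∑' m, eLpNorm (X m) 2 μpr ≠ ∞ :=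
    tsum_eLpNorm_two_ne_top_of_lintegral_le_geometric
      (ENNReal.sum_ne_top.mpr fun k _ => by finiteness) (ENNReal.ofReal_lt_one.mpr hlt)
      (lintegral_enorm_prod_mul_add_mul_sq_le hP0 hμ0 hZmeas hZ
        (fun k => hlam.2 (Set.mem_range_self k)) hεmeas hε2 hZε)
  exact ⟨by simpa only [Real.norm_eq_abs] using
      summable_norm_of_tsum_eLpNorm_ne_top one_le_two hX hsum,
    (memLp_tsum_of_tsum_eLpNorm_ne_top one_le_two hX hsum).integrable_sq⟩

/-- Core of Theorem 3 of the paper: if `λ = max_k ∑_j P k j a₁(j)² < 1` and all complex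
eigenvalues of `P φ₁⁺` (with `φ₁⁺ = diag |a₁|`) lie inside the unit circle, then the
random series `S = ∑_{m=0}^∞ (∏_{i=2}^{m+1} a₁(Z_i)) (a₀(Z₁) + σ(Z₁) ε_m)` converges
absolutely almost surely and `E[S²] < ∞`.  Here `Z n` stands for `Z_{n+1}`. -/
theorem stmt_16 (K : ℕ) (P : Matrix (Fin K) (Fin K) ℝ)
    (hP0 : ∀ i j, 0 ≤ P i j) (hP1 : ∀ i, ∑ j, P i j = 1)
    (μvec : Fin K → ℝ) (hμ0 : ∀ k, 0 ≤ μvec k) (hμ1 : ∑ k, μvec k = 1)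
    (a₀ a₁ σv : Fin K → ℝ) (lam : ℝ)
    (hlam : IsGreatest (Set.range fun k : Fin K => ∑ j, P k j * a₁ j ^ 2) lam)
    (hlt : lam < 1)
    (hspec : ∀ x ∈ spectrum ℂ
      ((P * Matrix.diagonal fun k => |a₁ k|).map Complex.ofReal), ‖x‖ < 1)
    {Ω : Type*} [MeasurableSpace Ω] (μpr : Measure Ω) [IsProbabilityMeasure μpr]
    (Z : ℕ → Ω → Fin K) (ε : ℕ → Ω → ℝ)
    (hZmeas : ∀ t, Measurable (Z t)) (hεmeas : ∀ t, Measurable (ε t))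
    (hZ : ∀ (n : ℕ) (z : Fin (n + 1) → Fin K),
      μpr {ω | ∀ i : Fin (n + 1), Z i ω = z i} =
        ENNReal.ofReal (μvec (z 0) * ∏ i : Fin n, P (z i.castSucc) (z i.succ)))
    (hεindep : ProbabilityTheory.iIndepFun ε μpr)
    (hεgauss : ∀ m, Measure.map (ε m) μpr = ProbabilityTheory.gaussianReal 0 1)
    (hZε : ProbabilityTheory.Indep
      (⨆ t, MeasurableSpace.comap (Z t) inferInstance)
      (⨆ m, MeasurableSpace.comap (ε m) inferInstance) μpr) :
    (∀ᵐ ω ∂μpr, Summable fun m : ℕ =>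
        |(∏ i ∈ Finset.Icc 1 m, a₁ (Z i ω)) * (a₀ (Z 0 ω) + σv (Z 0 ω) * ε m ω)|) ∧
      Integrable (fun ω =>
        (∑' m : ℕ,
          (∏ i ∈ Finset.Icc 1 m, a₁ (Z i ω)) * (a₀ (Z 0 ω) + σv (Z 0 ω) * ε m ω)) ^ 2)
        μpr :=
  stmt_16_general K P hP0 μvec hμ0 a₀ a₁ σv lam hlam hlt μpr Z ε hZmeas hεmeas hZ hεgauss hZε
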